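/- arXiv:1601.04661 — 7 statements merged into one kernel-verified Lean document; each statement's English description precedes it below -/
import Mathlib

section
/- Let 𝒜 be a well-formed DFA over a finite alphabet Σ, i.e., a DFA whose set of accepting states is the singleton {q₀} consisting of its start state, and let Δ be its set of transitions (q,a,q') with δ q a = q'. For a Parikh vector p : Σ → ℕ, let W(𝒜,p) be the set of all maps w : Δ → ℕ such that (i) for every a ∈ Σ, p a = Σ_{(q,a,q') ∈ Δ} w(q,a,q'), and (ii) the multigraph on the states of 𝒜 that has, for each transition δ ∈ Δ, w(δ) parallel edges from its source state to its target state, is Eulerian and its positive-weight part together with q₀ is connected. Then N(𝒜,p) = Σ_{w ∈ W(𝒜,p)} e_{q₀}(𝒜,w), where e_{q₀}(𝒜,w) is the number of finite sequences of transitions that form a walk starting and ending at q₀ and use each transition δ ∈ Δ exactly w(δ) times. -/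
open Finset

/-- `N(A,p)`: the number of words accepted by the DFA `A` whose Parikh image is `p`,
i.e. in which every letter `a` occurs exactly `p a` times. -/
noncomputable def parikhCount {σ Q : Type} [DecidableEq σ] (A : DFA σ Q) (p : σ → ℕ) : ℕ :=
  Nat.card {l : List σ // l ∈ A.accepts ∧ ∀ a : σ, l.count a = p a}

/-- The set `W(A,p)` of edge multiplicity assignments `w` on the transitions
`Δ = Q × σ` of the DFA `A` (the transition `(q,a)` goes from `q` to `A.step q a`) such
that (i) for every letter `a`, `p a` is the total multiplicity of transitions labelled
`a`; and (ii) the multigraph with `w d` parallel copies of each transition `d` is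
Eulerian and its positive-weight part together with the start state is connected. -/
def parikhFlows {σ Q : Type} [Fintype σ] [Fintype Q] [DecidableEq σ] [DecidableEq Q]
    (A : DFA σ Q) (p : σ → ℕ) : Set (Q × σ → ℕ) :=
  {w |
    (∀ a : σ, p a = ∑ q : Q, w (q, a)) ∧
    (∀ v : Q,
      (∑ d ∈ univ.filter (fun d : Q × σ => A.step d.1 d.2 = v), w d) =
        ∑ a : σ, w (v, a)) ∧
    (∀ u ∈ ({A.start} : Set Q) ∪ {q | ∃ a : σ, 0 < w (q, a)} ∪
        {q | ∃ d : Q × σ, 0 < w d ∧ A.step d.1 d.2 = q},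
      ∀ v ∈ ({A.start} : Set Q) ∪ {q | ∃ a : σ, 0 < w (q, a)} ∪
        {q | ∃ d : Q × σ, 0 < w d ∧ A.step d.1 d.2 = q},
      Relation.ReflTransGen
        (fun x y => ∃ d : Q × σ, 0 < w d ∧ d.1 = x ∧ A.step d.1 d.2 = y) u v)}

/-- `e_{q₀}(A,w)`: the number of finite sequences of transitions of the DFA `A` that
form a walk starting and ending at the start state and use each transition `d` exactly
`w d` times. -/
noncomputable def closedWalkCount {σ Q : Type} [DecidableEq σ] [DecidableEq Q]
    (A : DFA σ Q) (w : Q × σ → ℕ) : ℕ :=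
  Nat.card {L : List (Q × σ) //
    L.Chain' (fun d₁ d₂ => A.step d₁.1 d₁.2 = d₂.1) ∧
    (∀ h : L ≠ [], (L.head h).1 = A.start ∧
      A.step (L.getLast h).1 (L.getLast h).2 = A.start) ∧
    ∀ d : Q × σ, L.count d = w d}

/-!
Reading a word from the start state traces a walk of transitions (`DFA.transitionsFrom`), and this
is a bijection between words and walks leaving the start state. Since the start state is the only
accepting state, accepted words are exactly the closed walks at the start state, and we group them
by their transition-count vector `w`. The letter counts of a word are read off from `w`, and `w`
always lies in `parikhFlows`: the targets of a closed walk are a rotation of its sources, so each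
state is entered as often as it is left, and the walk joins every state it touches to the start
state in both directions.
-/

open Relation

namespace List

variable {α β : Type*}

theorem count_map_eq_sum_count [BEq α] [LawfulBEq α] [Fintype α] [DecidableEq β] (f : α → β)
    (l : List α) (b : β) :
    (l.map f).count b = ∑ a with f a = b, l.count a := by
  classical
  induction l with
  | nil => simp
  | cons x l ih =>
    simp only [map_cons, count_cons, ih, sum_add_distrib, beq_iff_eq]
    rw [sum_ite_eq]
    simp

theorem count_map_snd [DecidableEq α] [DecidableEq β] [Fintype α] (l : List (α × β)) (b : β) :
    (l.map Prod.snd).count b = ∑ a, l.count (a, b) := by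
  induction l with
  | nil => simp
  | cons x l ih =>
    by_cases h : x.2 = b <;> simp [count_cons, ih, sum_add_distrib, Prod.ext_iff, h]

theorem count_map_fst [DecidableEq α] [DecidableEq β] [Fintype β] (l : List (α × β)) (a : α) :
    (l.map Prod.fst).count a = ∑ b, l.count (a, b) := by
  induction l with
  | nil => simp
  | cons x l ih =>
    by_cases h : x.1 = a <;> simp [count_cons, ih, sum_add_distrib, Prod.ext_iff, h]

theorem sum_count_eq_length [DecidableEq α] [Fintype α] (l : List α) :
    ∑ a, l.count a = l.length := by
  simpa using Multiset.sum_count_eq_card (s := univ) (m := (l : Multiset α)) (by simp)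

theorem finite_setOf_count_eq [DecidableEq α] [Fintype α] (p : α → ℕ) :
    {l : List α | ∀ a, l.count a = p a}.Finite :=
  (finite_length_le α (∑ a, p a)).subset fun l hl =>
    ((sum_count_eq_length l).symm.trans (sum_congr rfl fun a _ => hl a)).le

end List

theorem Nat.card_eq_finsum_card_fiberwise {α β : Type*} (P : α → Prop) (f : α → β) {S : Set β}
    (hS : S.Finite) [Finite {x // P x ∧ f x ∈ S}] :
    Nat.card {x // P x ∧ f x ∈ S} = ∑ᶠ b ∈ S, Nat.card {x // P x ∧ f x = b} := by
  have := hS.fintype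
  let g : {x // P x ∧ f x ∈ S} → S := fun x => ⟨f x, x.2.2⟩
  have fiber (b : S) : {x // g x = b} ≃ {x // P x ∧ f x = b} :=
    { toFun x := ⟨x.1, x.1.2.1, congrArg Subtype.val x.2⟩
      invFun x := ⟨⟨x, x.2.1, x.2.2.symm ▸ b.2⟩, Subtype.ext x.2.2⟩
      left_inv _ := rfl
      right_inv _ := rfl }
  rw [← Nat.card_congr (Equiv.sigmaFiberEquiv g), Nat.card_sigma, ← finsum_set_coe_eq_finsum_mem,
    finsum_eq_sum_of_fintype]
  exact sum_congr rfl fun b _ => Nat.card_congr (fiber b)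

namespace DFA

variable {σ Q : Type*}

def transitionsFrom (A : DFA σ Q) : Q → List σ → List (Q × σ)
  | _, [] => []
  | q, a :: l => (q, a) :: A.transitionsFrom (A.step q a) l

variable (A : DFA σ Q)

@[simp] theorem transitionsFrom_nil (q : Q) : A.transitionsFrom q [] = [] := rfl

@[simp] theorem transitionsFrom_cons (q : Q) (a : σ) (l : List σ) :
    A.transitionsFrom q (a :: l) = (q, a) :: A.transitionsFrom (A.step q a) l := rfl

@[simp] theorem transitionsFrom_eq_nil {q : Q} {l : List σ} :
    A.transitionsFrom q l = [] ↔ l = [] := by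
  cases l <;> simp

@[simp] theorem map_snd_transitionsFrom (q : Q) (l : List σ) :
    (A.transitionsFrom q l).map Prod.snd = l := by
  induction l generalizing q <;> simp [*]

theorem isChain_transitionsFrom (q : Q) (l : List σ) :
    (A.transitionsFrom q l).IsChain (fun d₁ d₂ => A.step d₁.1 d₁.2 = d₂.1) := by
  induction l generalizing q with
  | nil => exact List.isChain_nil
  | cons a l ih => cases l <;> simp_all [List.isChain_cons_cons]

theorem fst_head_transitionsFrom {q : Q} {l : List σ} (h : A.transitionsFrom q l ≠ []) :
    ((A.transitionsFrom q l).head h).1 = q := by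
  cases l
  · simp at h
  · rfl

theorem step_getLast_transitionsFrom {q : Q} {l : List σ} (h : A.transitionsFrom q l ≠ []) :
    A.step ((A.transitionsFrom q l).getLast h).1 ((A.transitionsFrom q l).getLast h).2 =
      A.evalFrom q l := by
  induction l generalizing q with
  | nil => simp at h
  | cons a l ih =>
    cases l with
    | nil => simp
    | cons b l => simpa [List.getLast_cons] using ih (q := A.step q a) (by simp)

theorem transitionsFrom_map_snd {q : Q} {L : List (Q × σ)}
    (hL : L.IsChain (fun d₁ d₂ => A.step d₁.1 d₁.2 = d₂.1)) (hq : ∀ h : L ≠ [], (L.head h).1 = q) :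
    A.transitionsFrom q (L.map Prod.snd) = L := by
  induction L generalizing q with
  | nil => rfl
  | cons d L ih =>
    obtain rfl : d.1 = q := hq (by simp)
    rw [List.isChain_cons] at hL
    exact congrArg (d :: ·) (ih hL.2 fun h => (hL.1 _ (List.head?_eq_some_head h)).symm)

theorem evalFrom_map_snd {q : Q} {L : List (Q × σ)}
    (hL : L.IsChain (fun d₁ d₂ => A.step d₁.1 d₁.2 = d₂.1)) (hq : ∀ h : L ≠ [], (L.head h).1 = q)
    (hne : L ≠ []) :
    A.evalFrom q (L.map Prod.snd) = A.step (L.getLast hne).1 (L.getLast hne).2 := by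
  have := A.step_getLast_transitionsFrom (q := q) (l := L.map Prod.snd) (by simpa using hne)
  simp only [A.transitionsFrom_map_snd hL hq] at this
  exact this.symm

theorem cons_map_step_transitionsFrom (q : Q) (l : List σ) :
    q :: (A.transitionsFrom q l).map (fun d => A.step d.1 d.2) =
      (A.transitionsFrom q l).map Prod.fst ++ [A.evalFrom q l] := by
  induction l generalizing q <;> simp [*]

theorem reflTransGen_evalFrom {E : Q × σ → Prop} {q : Q} {l : List σ}
    (hE : ∀ d ∈ A.transitionsFrom q l, E d) :
    ReflTransGen (fun x y => ∃ d, E d ∧ d.1 = x ∧ A.step d.1 d.2 = y) q (A.evalFrom q l) := by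
  induction l generalizing q with
  | nil => exact .refl
  | cons a l ih =>
    simp only [transitionsFrom_cons, List.mem_cons, forall_eq_or_imp] at hE
    exact .head ⟨(q, a), hE.1, rfl, rfl⟩ (ih hE.2)

theorem reflTransGen_of_mem_transitionsFrom {E : Q × σ → Prop} {q : Q} {l : List σ}
    (hE : ∀ d ∈ A.transitionsFrom q l, E d) {d : Q × σ} (hd : d ∈ A.transitionsFrom q l) :
    ReflTransGen (fun x y => ∃ d, E d ∧ d.1 = x ∧ A.step d.1 d.2 = y) q d.1 ∧
      ReflTransGen (fun x y => ∃ d, E d ∧ d.1 = x ∧ A.step d.1 d.2 = y)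
        (A.step d.1 d.2) (A.evalFrom q l) := by
  induction l generalizing q with
  | nil => simp at hd
  | cons a l ih =>
    simp only [transitionsFrom_cons, List.mem_cons, forall_eq_or_imp] at hE hd
    rcases hd with rfl | hd
    · exact ⟨.refl, A.reflTransGen_evalFrom hE.2⟩
    · exact ⟨.head ⟨(q, a), hE.1, rfl, rfl⟩ (ih hE.2 hd).1, (ih hE.2 hd).2⟩

theorem sum_count_transitionsFrom_in_eq_out [Fintype σ] [Fintype Q] [DecidableEq σ]
    [DecidableEq Q] {q : Q} {l : List σ} (hq : A.evalFrom q l = q) (v : Q) :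
    ∑ d with A.step d.1 d.2 = v, (A.transitionsFrom q l).count d =
      ∑ a, (A.transitionsFrom q l).count (v, a) := by
  have hperm : (q :: (A.transitionsFrom q l).map fun d => A.step d.1 d.2).Perm
      (q :: (A.transitionsFrom q l).map Prod.fst) := by
    rw [cons_map_step_transitionsFrom, hq]
    exact List.perm_append_singleton q _
  calc ∑ d with A.step d.1 d.2 = v, (A.transitionsFrom q l).count d
      = ((A.transitionsFrom q l).map fun d => A.step d.1 d.2).count v :=
        (List.count_map_eq_sum_count _ _ _).symm
    _ = ((A.transitionsFrom q l).map Prod.fst).count v := hperm.cons_inv.count_eq v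
    _ = ∑ a, (A.transitionsFrom q l).count (v, a) := List.count_map_fst _ _

end DFA

section ParikhFlows

variable {σ Q : Type} [DecidableEq σ] [DecidableEq Q] (A : DFA σ Q)

theorem parikhFlows_finite [Fintype σ] [Fintype Q] (p : σ → ℕ) : (parikhFlows A p).Finite := by
  refine (Set.Finite.pi fun d : Q × σ => Set.finite_Iic (p d.2)).subset ?_
  rintro w ⟨hp, -, -⟩ d -
  rw [Set.mem_Iic, hp]
  exact single_le_sum (f := fun q => w (q, d.2)) (fun _ _ => Nat.zero_le _) (mem_univ d.1)

theorem count_transitionsFrom_mem_parikhFlows_iff [Fintype σ] [Fintype Q] {l : List σ}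
    (hl : A.evalFrom A.start l = A.start) (p : σ → ℕ) :
    (fun d => (A.transitionsFrom A.start l).count d) ∈ parikhFlows A p ↔
      ∀ a, l.count a = p a := by
  set L := A.transitionsFrom A.start l
  have hletter (a : σ) : ∑ q, L.count (q, a) = l.count a := by
    rw [← List.count_map_snd, A.map_snd_transitionsFrom]
  refine ⟨fun hw a => (hletter a).symm.trans (hw.1 a).symm, fun hp => ?_⟩
  refine ⟨fun a => by rw [hletter, hp], A.sum_count_transitionsFrom_in_eq_out hl, ?_⟩
  set R : Q → Q → Prop := fun x y => ∃ d : Q × σ, 0 < L.count d ∧ d.1 = x ∧ A.step d.1 d.2 = y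
  have hreach {d} (hd : d ∈ L) :
      ReflTransGen R A.start d.1 ∧ ReflTransGen R (A.step d.1 d.2) A.start := by
    have := A.reflTransGen_of_mem_transitionsFrom (fun _ => List.count_pos_iff.mpr) hd
    rwa [hl] at this
  have hcycle (u : Q) (hu : (u = A.start ∨ ∃ a, 0 < L.count (u, a)) ∨
      ∃ d, 0 < L.count d ∧ A.step d.1 d.2 = u) :
      ReflTransGen R A.start u ∧ ReflTransGen R u A.start := by
    rcases hu with (rfl | ⟨a, ha⟩) | ⟨d, hd, rfl⟩
    · exact ⟨.refl, .refl⟩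
    · have := hreach (List.count_pos_iff.mp ha)
      exact ⟨this.1, .head ⟨_, ha, rfl, rfl⟩ this.2⟩
    · have := hreach (List.count_pos_iff.mp hd)
      exact ⟨this.1.tail ⟨d, hd, rfl, rfl⟩, this.2⟩
  exact fun u hu v hv => (hcycle u hu).2.trans (hcycle v hv).1

theorem closedWalkCount_eq_card (w : Q × σ → ℕ) :
    closedWalkCount A w = Nat.card {l : List σ // A.evalFrom A.start l = A.start ∧
      (fun d => (A.transitionsFrom A.start l).count d) = w} := by
  refine Nat.card_congr
    { toFun L := ⟨L.1.map Prod.snd, ?_, ?_⟩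
      invFun l := ⟨A.transitionsFrom A.start l, A.isChain_transitionsFrom _ _,
        fun h => ⟨A.fst_head_transitionsFrom h, (A.step_getLast_transitionsFrom h).trans l.2.1⟩,
        fun d => congrFun l.2.2 d⟩
      left_inv L := Subtype.ext (A.transitionsFrom_map_snd L.2.1 fun h => (L.2.2.1 h).1)
      right_inv l := Subtype.ext (A.map_snd_transitionsFrom _ _) }
  all_goals
    obtain ⟨L, hwalk, hclosed, hcount⟩ := L
    have hstart (h : L ≠ []) : (L.head h).1 = A.start := (hclosed h).1
  · rcases eq_or_ne L [] with rfl | hne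
    · rfl
    · rw [A.evalFrom_map_snd hwalk hstart hne, (hclosed hne).2]
  · funext d
    rw [A.transitionsFrom_map_snd hwalk hstart, hcount]

end ParikhFlows

/-- For a well-formed DFA `A` (its set of accepting states is the singleton consisting
of its start state) and a Parikh vector `p`,
`N(A,p) = Σ_{w ∈ W(A,p)} e_{q₀}(A,w)`. -/
theorem parikhCount_eq_sum_closedWalkCount {σ Q : Type}
    [Fintype σ] [Fintype Q] [DecidableEq σ] [DecidableEq Q]
    (A : DFA σ Q) (hwf : A.accept = {A.start}) (p : σ → ℕ) :
    parikhCount A p = ∑ᶠ w ∈ parikhFlows A p, closedWalkCount A w := by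
  have hwords (l : List σ) : (l ∈ A.accepts ∧ ∀ a, l.count a = p a) ↔
      (A.evalFrom A.start l = A.start ∧
        (fun d => (A.transitionsFrom A.start l).count d) ∈ parikhFlows A p) := by
    rw [DFA.mem_accepts, hwf, Set.mem_singleton_iff]
    exact and_congr_right fun hl => (count_transitionsFrom_mem_parikhFlows_iff A hl p).symm
  have : Finite {l // l ∈ A.accepts ∧ ∀ a, l.count a = p a} :=
    ((List.finite_setOf_count_eq p).subset fun _ hl => hl.2).to_subtype
  have := Finite.of_equiv _ (Equiv.subtypeEquivRight hwords)
  rw [parikhCount, Nat.card_congr (Equiv.subtypeEquivRight hwords),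
    Nat.card_eq_finsum_card_fiberwise _ _ (parikhFlows_finite A p)]
  exact finsum_mem_congr rfl fun w _ => (closedWalkCount_eq_card A w).symm
end

section
/- For every DFA 𝒜 over the alphabet Fin k and every Parikh vector p : Fin k → ℕ, there exists a DFA 𝒜' over the alphabet Fin (k+1) whose set of accepting states is the singleton consisting of its start state, such that N(𝒜,p) = N(𝒜',p'), where p' : Fin (k+1) → ℕ agrees with p on the first k letters and assigns the value 1 to the new letter. -/
def parikhWords {σ Q : Type} [DecidableEq σ] (A : DFA σ Q) (p : σ → ℕ) : Set (List σ) :=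
  {l | l ∈ A.accepts ∧ ∀ a : σ, l.count a = p a}

theorem parikhCount_eq_card_parikhWords {σ Q : Type} [DecidableEq σ] (A : DFA σ Q)
    (p : σ → ℕ) : parikhCount A p = Nat.card (parikhWords A p) := rfl

namespace DFA

section

variable {α σ : Type*} (M : DFA α σ)

def resumeState (s : Option (Option σ)) : Option σ := s.map (·.getD M.start)

open Classical in
/-- States: `none` is a dead state, `some none` the hub, and `some (some q)` is `M` in state `q`. -/
noncomputable def withEndMarker : DFA (Option α) (Option (Option σ)) where
  step s
    | some a => (M.resumeState s).map fun q => some (M.step q a)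
    | none => if ∃ q ∈ M.resumeState s, q ∈ M.accept then some none else none
  start := some none
  accept := {some none}

theorem mem_accepts_withEndMarker_iff {u : List (Option α)} :
    u ∈ M.withEndMarker.accepts ↔ M.withEndMarker.eval u = some none := Iff.rfl

theorem withEndMarker_step_some (s : Option (Option σ)) (a : α) :
    M.withEndMarker.step s (some a) = (M.resumeState s).map fun q => some (M.step q a) := rfl

theorem withEndMarker_step_some_ne_start (s : Option (Option σ)) (a : α) :
    M.withEndMarker.step s (some a) ≠ some none := by
  simp [withEndMarker]

theorem withEndMarker_step_none_eq_start_iff (s : Option (Option σ)) :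
    M.withEndMarker.step s none = some none ↔ ∃ q ∈ M.resumeState s, q ∈ M.accept := by
  simp [withEndMarker]

theorem resumeState_evalFrom_map_some (s : Option (Option σ)) (w : List α) :
    M.resumeState (M.withEndMarker.evalFrom s (w.map some)) =
      (M.resumeState s).map (M.evalFrom · w) := by
  induction w generalizing s with
  | nil => simp
  | cons a w ih =>
    rw [List.map_cons, evalFrom_cons, ih, withEndMarker_step_some]
    cases M.resumeState s <;> simp [resumeState]

theorem resumeState_eval_map_some (w : List α) :
    M.resumeState (M.withEndMarker.eval (w.map some)) = some (M.eval w) :=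
  M.resumeState_evalFrom_map_some _ w

theorem map_some_append_none_mem_accepts_withEndMarker_iff (w : List α) :
    w.map some ++ [none] ∈ M.withEndMarker.accepts ↔ w ∈ M.accepts := by
  rw [mem_accepts_withEndMarker_iff, eval_append_singleton, withEndMarker_step_none_eq_start_iff,
    resumeState_eval_map_some]
  simp [mem_accepts]

end

section

variable {α σ : Type} [DecidableEq α] (M : DFA α σ) (p : α → ℕ)

theorem map_some_append_none_mem_parikhWords_withEndMarker_iff (w : List α) :
    w.map some ++ [none] ∈ parikhWords M.withEndMarker (fun b => b.elim 1 p) ↔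
      w ∈ parikhWords M p := by
  simp [parikhWords, M.map_some_append_none_mem_accepts_withEndMarker_iff, Option.forall,
    List.count_eq_zero.2, List.count_map_of_injective, Option.some_injective]

theorem exists_map_some_append_none_of_mem_parikhWords_withEndMarker {u : List (Option α)}
    (hu : u ∈ parikhWords M.withEndMarker (fun b => b.elim 1 p)) :
    ∃ w : List α, w.map some ++ [none] = u := by
  obtain ⟨hu, hcount⟩ := hu
  replace hcount := hcount none
  obtain ⟨u, b, rfl⟩ := (List.eq_nil_or_concat u).resolve_left (by rintro rfl; simp at hcount)
  have hb : b = none := by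
    rw [List.concat_eq_append, mem_accepts_withEndMarker_iff, eval_append_singleton] at hu
    cases b with
    | none => rfl
    | some a => exact absurd hu (M.withEndMarker_step_some_ne_start _ a)
  subst hb
  have hnone : none ∉ u := by simpa [List.count_eq_zero] using hcount
  obtain ⟨w, rfl⟩ : u ∈ Set.range (List.map some) := by
    rw [Set.range_list_map]
    exact fun x hx => Option.ne_none_iff_exists.1 (ne_of_mem_of_not_mem hx hnone)
  exact ⟨w, (List.concat_eq_append ..).symm⟩

theorem parikhWords_withEndMarker :
    parikhWords M.withEndMarker (fun b => b.elim 1 p) =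
      (fun w => w.map some ++ [none]) '' parikhWords M p := by
  ext u
  constructor
  · intro hu
    obtain ⟨w, rfl⟩ := exists_map_some_append_none_of_mem_parikhWords_withEndMarker M p hu
    exact ⟨w, (map_some_append_none_mem_parikhWords_withEndMarker_iff M p w).1 hu, rfl⟩
  · rintro ⟨w, hw, rfl⟩
    exact (map_some_append_none_mem_parikhWords_withEndMarker_iff M p w).2 hw

theorem parikhCount_withEndMarker :
    parikhCount M.withEndMarker (fun b => b.elim 1 p) = parikhCount M p := by
  rw [parikhCount_eq_card_parikhWords, parikhCount_eq_card_parikhWords, parikhWords_withEndMarker,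
    Nat.card_image_of_injective]
  exact fun w w' h =>
    List.map_injective_iff.2 (Option.some_injective α) (List.append_cancel_right h)

end

theorem parikhCount_comap_equiv {α β σ : Type} [DecidableEq α] [DecidableEq β] (e : α ≃ β)
    (M : DFA β σ) (p : β → ℕ) : parikhCount (M.comap e) (p ∘ e) = parikhCount M p := by
  refine Nat.card_congr ((Equiv.listEquivOfEquiv e).subtypeEquiv fun l => and_congr ?_ ?_)
  · rw [accepts_comap]
    rfl
  · simp [Equiv.listEquivOfEquiv, ← e.forall_congr_right,
      List.count_map_of_injective _ _ e.injective]

end DFA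

theorem Fin.snoc_eq_elim_comp_finSuccEquivLast {k : ℕ} {β : Type*} (p : Fin k → β) (b : β) :
    (Fin.snoc p b : Fin (k + 1) → β) = (fun o => o.elim b p) ∘ finSuccEquivLast := by
  funext i
  induction i using Fin.lastCases <;> simp [finSuccEquivLast_castSucc]

/-- For every DFA `A` over the alphabet `Fin k` and every Parikh vector
`p : Fin k → ℕ`, there is a DFA `A'` over the alphabet `Fin (k+1)` whose set of
accepting states is the singleton consisting of its start state, such that
`N(A,p) = N(A',p')`, where `p' = Fin.snoc p 1` agrees with `p` on the first `k` letters
and assigns the value `1` to the new letter. -/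
theorem exists_wellformed_dfa_same_parikhCount {k : ℕ} {Q : Type} [Fintype Q]
    (A : DFA (Fin k) Q) (p : Fin k → ℕ) :
    ∃ (Q' : Type) (_ : Fintype Q') (A' : DFA (Fin (k + 1)) Q'),
      A'.accept = {A'.start} ∧
      parikhCount A p = parikhCount A' (Fin.snoc p 1) := by
  refine ⟨_, inferInstance, A.withEndMarker.comap finSuccEquivLast, rfl, ?_⟩
  rw [Fin.snoc_eq_elim_comp_finSuccEquivLast, DFA.parikhCount_comap_equiv,
    DFA.parikhCount_withEndMarker]
end

section
/- Let M be an m × m integer matrix. Define the matrix B with natural-number entries, indexed by Fin m × Bool, by B (k,s) (l,t) = |M k l| if either (M k l > 0 and s = t) or (M k l < 0 and s ≠ t), and B (k,s) (l,t) = 0 otherwise. Then for all n ∈ ℕ and all k, l ∈ Fin m: (Mⁿ) k l = (Bⁿ) (k,true) (l,true) − (Bⁿ) (k,true) (l,false), where the right-hand side is computed in ℤ. -/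
/-- Powers of an integer matrix as differences of path counts: let `B` be the
natural-number matrix indexed by `Fin m × Bool` with
`B (k,s) (l,t) = |M k l|` if (`M k l > 0` and `s = t`) or (`M k l < 0` and `s ≠ t`),
and `B (k,s) (l,t) = 0` otherwise. Then for all `n`, `k`, `l`:
`(Mⁿ) k l = (Bⁿ) (k,true) (l,true) - (Bⁿ) (k,true) (l,false)` in `ℤ`. -/
theorem matrix_pow_eq_pathcount_diff {m : ℕ} (M : Matrix (Fin m) (Fin m) ℤ)
    (B : Matrix (Fin m × Bool) (Fin m × Bool) ℕ)
    (hB : ∀ (k l : Fin m) (s t : Bool),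
      B (k, s) (l, t) =
        if (0 < M k l ∧ s = t) ∨ (M k l < 0 ∧ s ≠ t) then (M k l).natAbs else 0)
    (n : ℕ) (k l : Fin m) :
    (M ^ n) k l =
      ((B ^ n) (k, true) (l, true) : ℤ) - ((B ^ n) (k, true) (l, false) : ℤ) := by
  induction n generalizing l with
  | zero =>
    simp only [pow_zero, Matrix.one_apply]
    by_cases h : k = l
    · subst h; simp
    · simp [h, Prod.ext_iff]
  | succ n ih =>
    rw [pow_succ, pow_succ, Matrix.mul_apply, Matrix.mul_apply, Matrix.mul_apply]
    push_cast
    rw [← Finset.sum_sub_distrib, Fintype.sum_prod_type]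
    refine Finset.sum_congr rfl fun j _ => ?_
    rw [Fintype.sum_bool]
    have hBt1 := hB j l true true
    have hBt2 := hB j l true false
    have hBf1 := hB j l false true
    have hBf2 := hB j l false false
    rw [ih j]
    rcases lt_trichotomy (M j l) 0 with h | h | h
    · simp only [h, h.not_gt, true_and, false_and, and_true, and_false] at hBt1 hBt2 hBf1 hBf2
      norm_num at hBt1 hBt2 hBf1 hBf2
      rw [hBt1, hBt2, hBf1, hBf2]
      push_cast [abs_of_neg h]
      ring
    · simp [h, hBt1, hBt2, hBf1, hBf2]
    · simp only [h, h.not_gt, true_and, false_and, and_true, and_false] at hBt1 hBt2 hBf1 hBf2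
      norm_num at hBt1 hBt2 hBf1 hBf2
      rw [hBt1, hBt2, hBf1, hBf2]
      push_cast [abs_of_nonneg h.le]
      ring
end

section
/- Let M be an m × m integer matrix and let b : Fin m → Fin m → ℤ be coefficients defining the linear function f(A) = Σ_{i,j} b i j · A i j on m × m integer matrices. Then there exist N ∈ ℕ, a matrix C with natural-number entries indexed by Fin N, and indices v₀, v⁺, v⁻ ∈ Fin N such that for all n ∈ ℕ: f(Mⁿ) = (C^{n+2}) v₀ v⁺ − (C^{n+2}) v₀ v⁻, where the right-hand side is computed in ℤ. -/
namespace PathCountAux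

open Matrix

variable {m : ℕ}

abbrev V (m : ℕ) := (Fin m × Fin m × Bool) ⊕ Fin 3

def Cfun (M : Matrix (Fin m) (Fin m) ℤ) (b : Fin m → Fin m → ℤ) : V m → V m → ℕ
  | Sum.inl (k, i, s), Sum.inl (k', j, t) =>
      if k = k' then (if s = t then (M i j).toNat else (-M i j).toNat) else 0
  | Sum.inl (k, j, s), Sum.inr t =>
      if t = 1 then (if s then (b k j).toNat else (-b k j).toNat)
      else if t = 2 then (if s then (-b k j).toNat else (b k j).toNat) else 0
  | Sum.inr r, Sum.inl (k, i, s) =>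
      if r = 0 ∧ i = k ∧ s = true then 1 else 0
  | Sum.inr _, Sum.inr _ => 0

def C (M : Matrix (Fin m) (Fin m) ℤ) (b : Fin m → Fin m → ℤ) : Matrix (V m) (V m) ℕ :=
  Matrix.of (Cfun M b)

variable (M : Matrix (Fin m) (Fin m) ℤ) (b : Fin m → Fin m → ℤ)

lemma col0 (u : V m) : C M b u (Sum.inr 0) = 0 := by
  rcases u with ⟨k, i, s⟩ | r <;> simp [C, Cfun]

lemma lemA (n : ℕ) (x : Fin m × Fin m × Bool) :
    (C M b ^ n) (Sum.inl x) (Sum.inr 0) = 0 := by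
  cases n with
  | zero => simp [Matrix.one_apply]
  | succ n =>
    rw [pow_succ, Matrix.mul_apply]
    exact Finset.sum_eq_zero fun u _ => by rw [col0, mul_zero]

lemma lemB (n : ℕ) : ∀ (k k' i j : Fin m) (s t : Bool), k ≠ k' →
    (C M b ^ n) (Sum.inl (k, i, s)) (Sum.inl (k', j, t)) = 0 := by
  induction n with
  | zero =>
    intro k k' i j s t hkk
    rw [pow_zero, Matrix.one_apply_ne]
    simp [hkk]
  | succ n ih =>
    intro k k' i j s t hkk
    rw [pow_succ, Matrix.mul_apply]
    apply Finset.sum_eq_zero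
    rintro (⟨k'', l, r⟩ | r) -
    · by_cases h : k'' = k'
      · subst h
        rw [ih k k'' i l s r hkk, zero_mul]
      · have : C M b (Sum.inl (k'', l, r)) (Sum.inl (k', j, t)) = 0 := by
          simp [C, Cfun, h]
        rw [this, mul_zero]
    · by_cases h0 : r = 0
      · subst h0; rw [lemA, zero_mul]
      · have : C M b (Sum.inr r) (Sum.inl (k', j, t)) = 0 := by simp [C, Cfun, h0]
        rw [this, mul_zero]

lemma hmax (a : ℤ) : a ⊔ 0 - (-a ⊔ 0) = a := by
  rcases le_total a 0 with h | h
  · rw [sup_eq_right.mpr h, sup_eq_left.mpr (neg_nonneg.mpr h)]; ring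
  · rw [sup_eq_left.mpr h, sup_eq_right.mpr (neg_nonpos.mpr h)]; ring

lemma lemW (n : ℕ) : ∀ (k i j : Fin m),
    ((C M b ^ n) (Sum.inl (k, i, true)) (Sum.inl (k, j, true)) : ℤ) -
      ((C M b ^ n) (Sum.inl (k, i, true)) (Sum.inl (k, j, false)) : ℤ) = (M ^ n) i j := by
  induction n with
  | zero =>
    intro k i j
    by_cases h : i = j
    · subst h; simp [Matrix.one_apply]
    · rw [pow_zero, pow_zero, Matrix.one_apply_ne (by simp [h]),
        Matrix.one_apply_ne (by simp), Matrix.one_apply_ne (by simp [h])]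
      simp
  | succ n ih =>
    intro k i j
    rw [pow_succ, pow_succ, Matrix.mul_apply, Matrix.mul_apply, Matrix.mul_apply]
    push_cast
    rw [← Finset.sum_sub_distrib]
    have step1 : ∑ u : V m,
        (((C M b ^ n) (Sum.inl (k, i, true)) u : ℤ) * (C M b u (Sum.inl (k, j, true)) : ℤ)
          - ((C M b ^ n) (Sum.inl (k, i, true)) u : ℤ) * (C M b u (Sum.inl (k, j, false)) : ℤ))
        = ∑ u : V m, Sum.elim (fun p : Fin m × Fin m × Bool =>
            if p.1 = k then ((if p.2.2 then 1 else -1) *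
              ((C M b ^ n) (Sum.inl (k, i, true)) (Sum.inl (k, p.2.1, p.2.2)) : ℤ) * M p.2.1 j)
            else 0) (fun _ => 0) u := by
      apply Finset.sum_congr rfl
      rintro (⟨k', l, s⟩ | r) -
      · by_cases hk : k' = k
        · subst hk
          cases s
          · have e1 : C M b (Sum.inl (k', l, false)) (Sum.inl (k', j, true)) = (-M l j).toNat := by
              simp [C, Cfun]
            have e2 : C M b (Sum.inl (k', l, false)) (Sum.inl (k', j, false)) = (M l j).toNat := by
              simp [C, Cfun]
            rw [e1, e2, Sum.elim_inl, if_pos rfl]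
            push_cast [Int.toNat_eq_max]
            norm_num
            linear_combination
              (-((C M b ^ n) (Sum.inl (k', i, true)) (Sum.inl (k', l, false)) : ℤ)) * hmax (M l j)
          · have e1 : C M b (Sum.inl (k', l, true)) (Sum.inl (k', j, true)) = (M l j).toNat := by
              simp [C, Cfun]
            have e2 : C M b (Sum.inl (k', l, true)) (Sum.inl (k', j, false)) = (-M l j).toNat := by
              simp [C, Cfun]
            rw [e1, e2, Sum.elim_inl, if_pos rfl]
            push_cast [Int.toNat_eq_max]
            norm_num
            linear_combination
              (((C M b ^ n) (Sum.inl (k', i, true)) (Sum.inl (k', l, true)) : ℤ)) * hmax (M l j)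
        · have e1 : C M b (Sum.inl (k', l, s)) (Sum.inl (k, j, true)) = 0 := by
            simp [C, Cfun, hk]
          have e2 : C M b (Sum.inl (k', l, s)) (Sum.inl (k, j, false)) = 0 := by
            simp [C, Cfun, hk]
          rw [e1, e2]
          simp [hk]
      · by_cases h0 : r = 0
        · subst h0
          rw [lemA]
          simp
        · have e1 : C M b (Sum.inr r) (Sum.inl (k, j, true)) = 0 := by simp [C, Cfun, h0]
          have e2 : C M b (Sum.inr r) (Sum.inl (k, j, false)) = 0 := by simp [C, Cfun]
          rw [e1, e2]
          simp
    rw [step1, Fintype.sum_sum_type]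
    simp only [Sum.elim_inl, Sum.elim_inr, Finset.sum_const_zero, add_zero,
      Fintype.sum_prod_type]
    rw [Finset.sum_eq_single k
      (fun k' _ hk' => Finset.sum_eq_zero fun l _ => Finset.sum_eq_zero fun s _ => if_neg hk')
      (fun h => absurd (Finset.mem_univ k) h)]
    apply Finset.sum_congr rfl
    intro l _
    rw [Fintype.sum_bool]
    norm_num
    linear_combination M l j * ih k i l


lemma hstart (n : ℕ) (v : V m) :
    ((C M b ^ (n + 2)) (Sum.inr 0) v : ℤ) =
      ∑ k : Fin m, ((C M b ^ (n + 1)) (Sum.inl (k, k, true)) v : ℤ) := by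
  rw [show n + 2 = (n + 1) + 1 from rfl, pow_succ', Matrix.mul_apply]
  push_cast
  rw [Fintype.sum_sum_type]
  have h2 : ∀ r : Fin 3,
      ((C M b (Sum.inr 0) (Sum.inr r) : ℤ)) * ((C M b ^ (n + 1)) (Sum.inr r) v : ℤ) = 0 := by
    intro r
    have : C M b (Sum.inr 0) (Sum.inr r) = 0 := by simp [C, Cfun]
    rw [this]; push_cast; ring
  rw [Finset.sum_congr rfl fun r _ => h2 r, Finset.sum_const_zero, add_zero]
  have h1 : ∀ p : Fin m × Fin m × Bool,
      ((C M b (Sum.inr 0) (Sum.inl p) : ℤ)) * ((C M b ^ (n + 1)) (Sum.inl p) v : ℤ) =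
        if p.2.1 = p.1 ∧ p.2.2 = true
          then ((C M b ^ (n + 1)) (Sum.inl (p.1, p.1, true)) v : ℤ) else 0 := by
    rintro ⟨k, i, s⟩
    by_cases h : i = k ∧ s = true
    · obtain ⟨h1, h2⟩ := h
      subst h1; subst h2
      have : C M b (Sum.inr 0) (Sum.inl (i, i, true)) = 1 := by simp [C, Cfun]
      rw [this]; simp
    · have : C M b (Sum.inr 0) (Sum.inl (k, i, s)) = 0 := by simp [C, Cfun, h]
      rw [this, if_neg h]; push_cast; ring
  rw [Finset.sum_congr rfl fun p _ => h1 p]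
  rw [Fintype.sum_prod_type]
  apply Finset.sum_congr rfl
  intro k _
  rw [Fintype.sum_prod_type]
  simp only [Fintype.sum_bool]
  simp [Finset.sum_ite_eq']

lemma hk (n : ℕ) (k : Fin m) :
    ((C M b ^ (n + 1)) (Sum.inl (k, k, true)) (Sum.inr 1) : ℤ) -
      ((C M b ^ (n + 1)) (Sum.inl (k, k, true)) (Sum.inr 2) : ℤ) =
      ∑ j : Fin m, (M ^ n) k j * b k j := by
  rw [pow_succ, Matrix.mul_apply, Matrix.mul_apply]
  push_cast
  rw [← Finset.sum_sub_distrib]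
  have step1 : ∑ u : V m,
      (((C M b ^ n) (Sum.inl (k, k, true)) u : ℤ) * (C M b u (Sum.inr 1) : ℤ)
        - ((C M b ^ n) (Sum.inl (k, k, true)) u : ℤ) * (C M b u (Sum.inr 2) : ℤ))
      = ∑ u : V m, Sum.elim (fun p : Fin m × Fin m × Bool =>
          if p.1 = k then ((if p.2.2 then 1 else -1) *
            ((C M b ^ n) (Sum.inl (k, k, true)) (Sum.inl (k, p.2.1, p.2.2)) : ℤ) * b k p.2.1)
          else 0) (fun _ => 0) u := by
    apply Finset.sum_congr rfl
    rintro (⟨k', j, s⟩ | r) -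
    · by_cases hkk : k' = k
      · subst hkk
        cases s
        · have e1 : C M b (Sum.inl (k', j, false)) (Sum.inr 1) = (-b k' j).toNat := by
            simp [C, Cfun]
          have e2 : C M b (Sum.inl (k', j, false)) (Sum.inr 2) = (b k' j).toNat := by
            simp [C, Cfun]
          rw [e1, e2, Sum.elim_inl, if_pos rfl]
          push_cast [Int.toNat_eq_max]
          norm_num
          linear_combination
            (-((C M b ^ n) (Sum.inl (k', k', true)) (Sum.inl (k', j, false)) : ℤ)) * hmax (b k' j)
        · have e1 : C M b (Sum.inl (k', j, true)) (Sum.inr 1) = (b k' j).toNat := by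
            simp [C, Cfun]
          have e2 : C M b (Sum.inl (k', j, true)) (Sum.inr 2) = (-b k' j).toNat := by
            simp [C, Cfun]
          rw [e1, e2, Sum.elim_inl, if_pos rfl]
          push_cast [Int.toNat_eq_max]
          norm_num
          linear_combination
            (((C M b ^ n) (Sum.inl (k', k', true)) (Sum.inl (k', j, true)) : ℤ)) * hmax (b k' j)
      · rw [lemB M b n k k' k j true s (fun h => hkk h.symm)]
        simp [hkk]
    · have e1 : C M b (Sum.inr r) (Sum.inr 1) = 0 := by simp [C, Cfun]
      have e2 : C M b (Sum.inr r) (Sum.inr 2) = 0 := by simp [C, Cfun]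
      rw [e1, e2]
      simp
  rw [step1, Fintype.sum_sum_type]
  simp only [Sum.elim_inl, Sum.elim_inr, Finset.sum_const_zero, add_zero,
    Fintype.sum_prod_type]
  rw [Finset.sum_eq_single k
    (fun k' _ hk' => Finset.sum_eq_zero fun l _ => Finset.sum_eq_zero fun s _ => if_neg hk')
    (fun h => absurd (Finset.mem_univ k) h)]
  apply Finset.sum_congr rfl
  intro j _
  rw [Fintype.sum_bool]
  norm_num
  linear_combination b k j * lemW M b n k k j

lemma final (n : ℕ) :
    ∑ i : Fin m, ∑ j : Fin m, b i j * (M ^ n) i j =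
      ((C M b ^ (n + 2)) (Sum.inr 0) (Sum.inr 1) : ℤ) -
        ((C M b ^ (n + 2)) (Sum.inr 0) (Sum.inr 2) : ℤ) := by
  rw [hstart M b n (Sum.inr 1), hstart M b n (Sum.inr 2), ← Finset.sum_sub_distrib]
  rw [Finset.sum_congr rfl fun k _ => hk M b n k]
  apply Finset.sum_congr rfl
  intro i _
  exact Finset.sum_congr rfl fun j _ => mul_comm _ _

end PathCountAux

/-- For an integer matrix `M` and a linear function `f(A) = Σ_{i,j} b i j ⬝ A i j`,
there are a natural-number matrix `C` (the adjacency matrix of a multigraph) and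
vertices `v₀, v⁺, v⁻` such that for all `n`,
`f(Mⁿ) = (C^(n+2)) v₀ v⁺ - (C^(n+2)) v₀ v⁻` in `ℤ`. -/
theorem linear_fn_of_matrix_pow_eq_pathcount_diff {m : ℕ}
    (M : Matrix (Fin m) (Fin m) ℤ) (b : Fin m → Fin m → ℤ) :
    ∃ (N : ℕ) (C : Matrix (Fin N) (Fin N) ℕ) (v₀ vplus vminus : Fin N),
      ∀ n : ℕ,
        ∑ i : Fin m, ∑ j : Fin m, b i j * (M ^ n) i j =
          ((C ^ (n + 2)) v₀ vplus : ℤ) - ((C ^ (n + 2)) v₀ vminus : ℤ) := by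
  classical
  set e := Fintype.equivFin (PathCountAux.V m) with he
  refine ⟨Fintype.card (PathCountAux.V m),
    (Matrix.reindexAlgEquiv (R := ℕ) (A := ℕ) e) (PathCountAux.C M b),
    e (Sum.inr 0), e (Sum.inr 1), e (Sum.inr 2), ?_⟩
  intro n
  have hpow : (Matrix.reindexAlgEquiv (R := ℕ) (A := ℕ) e) (PathCountAux.C M b) ^ (n + 2) =
      (Matrix.reindexAlgEquiv (R := ℕ) (A := ℕ) e) (PathCountAux.C M b ^ (n + 2)) :=
    (map_pow (Matrix.reindexAlgEquiv (R := ℕ) (A := ℕ) e) _ _).symm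
  rw [hpow]
  have hentry : ∀ u v : PathCountAux.V m,
      (Matrix.reindexAlgEquiv (R := ℕ) (A := ℕ) e) (PathCountAux.C M b ^ (n + 2)) (e u) (e v) =
        (PathCountAux.C M b ^ (n + 2)) u v := by
    intro u v
    simp [Matrix.reindexAlgEquiv_apply, Matrix.reindex_apply]
  rw [hentry, hentry]
  exact PathCountAux.final M b n
end

section
/- Let A be an m × m matrix with natural-number entries, let v₀, v₁ ∈ Fin m, and let k ≥ 1 be such that every entry of A is strictly less than 2^k. Then there exist N ∈ ℕ, a matrix B indexed by Fin N with all entries at most 2, and an injection ι : Fin m ↪ Fin N such that for all n ∈ ℕ: (Aⁿ) v₀ v₁ = (B^{n·k}) (ι v₀) (ι v₁). -/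
/-!
Write `A = ∑_{i ≤ K} 2^i A_i` (`k = K + 1`) with `0/1` digit matrices `A_i`. Put two copies `D`,
`E` of the vertices on each of `k` levels arranged in a cycle, every edge climbing one level: from
level `i < K`, `D → D` carries two parallel edges, `D → E` the digit matrix `A_i` and `E → E` a
single edge; from level `K` back to `0`, `D → D` carries `A_K` and `E → D` a single edge. A round
of `k` steps from `D` at level `0` back to it doubles `i` times and then takes digit `i`, which
gives `∑ 2^i A_i = A` paths, and a walk of length `n k` between level-`0` vertices is a sequence
of `n` rounds.
-/

namespace Matrix

section LayeredCycle

variable {W G R : Type*} [AddMonoidWithOne G] [Semiring R]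

def layeredCycle [DecidableEq G] (L : G → Matrix W W R) : Matrix (W × G) (W × G) R :=
  of fun p q => if q.2 = p.2 + 1 then L p.2 p.1 q.1 else 0

@[simp]
theorem layeredCycle_apply [DecidableEq G] (L : G → Matrix W W R) (x y : W) (s t : G) :
    layeredCycle L (x, s) (y, t) = if t = s + 1 then L s x y else 0 :=
  rfl

variable [Fintype W] [DecidableEq W]

def layerProd (L : G → Matrix W W R) (s : G) (j : ℕ) : Matrix W W R :=
  ((List.range j).map fun i : ℕ => L (s + i)).prod

theorem layerProd_succ (L : G → Matrix W W R) (s : G) (j : ℕ) :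
    layerProd L s (j + 1) = layerProd L s j * L (s + j) :=
  List.prod_range_succ _ j

variable [Fintype G] [DecidableEq G]

theorem layeredCycle_pow_apply (L : G → Matrix W W R) (j : ℕ) (x y : W) (s t : G) :
    (layeredCycle L ^ j) (x, s) (y, t) = if t = s + j then layerProd L s j x y else 0 := by
  induction j generalizing y t with
  | zero => by_cases h : s = t <;> simp [layerProd, one_apply, h, eq_comm]
  | succ j ih =>
    rw [pow_succ, mul_apply, Fintype.sum_prod_type, layerProd_succ, mul_apply, Nat.cast_succ,
      ← add_assoc]
    simp only [ih, layeredCycle_apply, ite_mul, zero_mul, Finset.sum_ite_eq', Finset.mem_univ,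
      if_true]
    simp only [mul_ite, mul_zero, Finset.sum_ite_irrel, Finset.sum_const_zero]

theorem layeredCycle_pow_eq_blockDiagonal (L : G → Matrix W W R) {k : ℕ} (hk : (k : G) = 0) :
    layeredCycle L ^ k = blockDiagonal fun s => layerProd L s k := by
  ext ⟨x, s⟩ ⟨y, t⟩
  rw [layeredCycle_pow_apply, blockDiagonal_apply', hk, add_zero]
  simp only [eq_comm]

theorem layeredCycle_pow_mul_apply (L : G → Matrix W W R) {k : ℕ} (hk : (k : G) = 0) (n : ℕ)
    (x y : W) (s : G) :
    (layeredCycle L ^ (n * k)) (x, s) (y, s) = (layerProd L s k ^ n) x y := by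
  rw [mul_comm, pow_mul, layeredCycle_pow_eq_blockDiagonal L hk, ← blockDiagonal_pow,
    blockDiagonal_apply', if_pos rfl, Pi.pow_apply]

end LayeredCycle

section BinaryLayers

variable {n : Type*} [DecidableEq n]

theorem fromBlocks_zero₁₂_pow [Fintype n] {α o : Type*} [Semiring α] [Fintype o] [DecidableEq o]
    (A : Matrix n n α) (C : Matrix o n α) (D : Matrix o o α) (k : ℕ) :
    ∃ C' : Matrix o n α, fromBlocks A 0 C D ^ k = fromBlocks (A ^ k) 0 C' (D ^ k) := by
  induction k with
  | zero => exact ⟨0, fromBlocks_one.symm⟩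
  | succ k ih =>
    obtain ⟨C', h⟩ := ih
    exact ⟨C' * A + D ^ k * C, by simp [pow_succ, h, fromBlocks_multiply]⟩

theorem two_pow_mul_apply [Fintype n] (M : Matrix n n ℕ) (j : ℕ) (u v : n) :
    ((2 : Matrix n n ℕ) ^ j * M) u v = 2 ^ j * M u v := by
  rw [← Nat.cast_ofNat, ← Nat.cast_pow, ← diagonal_natCast', diagonal_mul, Pi.natCast_apply,
    Nat.cast_id]

def digitMatrix {m : Type*} (A : Matrix m n ℕ) (i : ℕ) : Matrix m n ℕ :=
  A.map (· / 2 ^ i % 2)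

theorem prod_range_fromBlocks_two_digitMatrix [Fintype n] (A : Matrix n n ℕ) (j : ℕ) :
    ((List.range j).map fun i =>
        fromBlocks (2 : Matrix n n ℕ) (digitMatrix A i) (0 : Matrix n n ℕ) 1).prod =
      fromBlocks (2 ^ j) (A.map (· % 2 ^ j)) (0 : Matrix n n ℕ) 1 := by
  induction j with
  | zero => ext (_ | _) (_ | _) <;> simp [one_apply, Nat.mod_one]
  | succ j ih =>
    rw [List.prod_range_succ, ih, fromBlocks_multiply]
    simp only [mul_zero, zero_mul, add_zero, mul_one, zero_add, ← pow_succ]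
    congr 1
    ext u v
    rw [add_apply, two_pow_mul_apply]
    simp [digitMatrix, Nat.mod_pow_succ, add_comm]

/-- `inl` is the copy `D` and `inr` the copy `E`. -/
def binaryLayer (A : Matrix n n ℕ) (K : ℕ) (i : ZMod (K + 1)) : Matrix (n ⊕ n) (n ⊕ n) ℕ :=
  if i.val < K then fromBlocks 2 (digitMatrix A i.val) 0 1
  else fromBlocks (digitMatrix A K) 0 1 0

theorem binaryLayer_apply_le_two (A : Matrix n n ℕ) (K : ℕ) (i : ZMod (K + 1)) (x y : n ⊕ n) :
    binaryLayer A K i x y ≤ 2 := by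
  have hdigit : ∀ j u v, digitMatrix A j u v ≤ 2 := fun _ _ _ => (Nat.mod_lt _ two_pos).le
  unfold binaryLayer
  split_ifs <;> rcases x with u | u <;> rcases y with v | v <;>
    simp [one_apply, ofNat_apply, hdigit] <;> split_ifs <;> simp

theorem layerProd_binaryLayer [Fintype n] (A : Matrix n n ℕ) (K : ℕ)
    (hA : ∀ u v, A u v < 2 ^ (K + 1)) :
    layerProd (binaryLayer A K) 0 (K + 1) = fromBlocks A 0 1 0 := by
  have hsteps : ((List.range K).map fun i : ℕ => binaryLayer A K (0 + i)) =
      (List.range K).map fun i => fromBlocks 2 (digitMatrix A i) 0 1 := by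
    refine List.map_congr_left fun i hi => ?_
    rw [List.mem_range] at hi
    simp [binaryLayer, ZMod.val_natCast_of_lt (hi.trans K.lt_succ_self), hi]
  have hlast : binaryLayer A K (0 + (K : ZMod (K + 1))) =
      fromBlocks (digitMatrix A K) 0 1 0 := by
    simp [binaryLayer, ZMod.val_natCast_of_lt K.lt_succ_self]
  rw [layerProd_succ, layerProd, hsteps, prod_range_fromBlocks_two_digitMatrix, hlast,
    fromBlocks_multiply]
  simp only [mul_zero, zero_mul, add_zero, mul_one, zero_add]
  congr 1
  ext u v
  rw [add_apply, two_pow_mul_apply, digitMatrix, map_apply, map_apply, add_comm, ← Nat.mod_pow_succ,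
    Nat.mod_eq_of_lt (hA u v)]

end BinaryLayers

end Matrix

open Matrix in
/-- From a weighted multigraph (adjacency matrix `A`, entries `< 2^k`) to an
unweighted multigraph with at most two parallel edges between any ordered pair of
vertices (adjacency matrix `B`, entries `≤ 2`): there exist `N`, a matrix `B` indexed
by `Fin N` with entries at most `2`, and an injection `ι : Fin m ↪ Fin N` such that
for all `n`, `(Aⁿ) v₀ v₁ = (B^(n·k)) (ι v₀) (ι v₁)`. -/
theorem weighted_to_unweighted_pathcount {m : ℕ} (A : Matrix (Fin m) (Fin m) ℕ)
    (v₀ v₁ : Fin m) (k : ℕ) (hk : 1 ≤ k) (hA : ∀ i j : Fin m, A i j < 2 ^ k) :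
    ∃ (N : ℕ) (B : Matrix (Fin N) (Fin N) ℕ) (ι : Fin m ↪ Fin N),
      (∀ i j : Fin N, B i j ≤ 2) ∧
      ∀ n : ℕ, (A ^ n) v₀ v₁ = (B ^ (n * k)) (ι v₀) (ι v₁) := by
  obtain ⟨K, rfl⟩ : ∃ K, k = K + 1 := ⟨k - 1, by omega⟩
  let e := Fintype.equivFin ((Fin m ⊕ Fin m) × ZMod (K + 1))
  let B := layeredCycle (binaryLayer A K)
  refine ⟨_, reindex e e B, ⟨fun u => e (.inl u, 0), fun u v h => by simpa using e.injective h⟩,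
    fun i j => ?_, fun n => ?_⟩
  · obtain ⟨⟨x, s⟩, rfl⟩ := e.surjective i
    obtain ⟨⟨y, t⟩, rfl⟩ := e.surjective j
    simp only [reindex_apply, submatrix_apply, Equiv.symm_apply_apply, B, layeredCycle_apply]
    split_ifs
    exacts [binaryLayer_apply_le_two A K s x y, zero_le_two]
  · obtain ⟨C, hC⟩ := fromBlocks_zero₁₂_pow A (1 : Matrix (Fin m) (Fin m) ℕ) 0 n
    show _ = (reindex e e B ^ (n * (K + 1))) (e (.inl v₀, 0)) (e (.inl v₁, 0))
    rw [← coe_reindexAlgEquiv ℕ, ← map_pow, coe_reindexAlgEquiv, reindex_apply, submatrix_apply,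
      e.symm_apply_apply, e.symm_apply_apply, layeredCycle_pow_mul_apply _ (ZMod.natCast_self _),
      layerProd_binaryLayer A K hA, hC, fromBlocks_apply₁₁]
end

section
/- Let A be an m × m matrix with natural-number entries, let u, v ∈ Fin m, and let d ≥ 1 be such that Σ_{l} A k l ≤ d for every k ∈ Fin m (d bounds the maximal out-degree). Then there exists a DFA 𝓜 over the two-letter alphabet Fin 2 such that for all n ∈ ℕ, the number of words w ∈ (Fin 2)* accepted by 𝓜 in which the letter 0 occurs exactly n times and the letter 1 occurs exactly n·(d−1) times equals (Aⁿ) u v. -/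
namespace MPD

variable {m : ℕ} (A : Matrix (Fin m) (Fin m) ℕ) (v : Fin m) (d : ℕ) (hd : 0 < d)

abbrev deg (k : Fin m) : ℕ := ∑ l, A k l

noncomputable def eE (k : Fin m) : Fin (deg A k) ≃ Σ l : Fin m, Fin (A k l) :=
  (Fintype.equivFinOfCardEq (by simp)).symm

noncomputable def tgt (k : Fin m) (j : Fin (deg A k)) : Fin m := (eE A k j).1

lemma sum_tgt (k : Fin m) (f : Fin m → ℕ) :
    ∑ j : Fin (deg A k), f (tgt A k j) = ∑ l, A k l * f l := by
  have h1 : ∑ j : Fin (deg A k), f (tgt A k j)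
      = ∑ x : Σ l : Fin m, Fin (A k l), f x.1 :=
    Equiv.sum_comp (eE A k) (fun x => f x.1)
  rw [h1, ← Finset.univ_sigma_univ, Finset.sum_sigma]
  simp [Finset.sum_const, mul_comm]

noncomputable def M (u : Fin m) : DFA (Fin 2) (Option (Fin m × Fin d × Fin d)) where
  step q a :=
    match q with
    | none => none
    | some (k, r, j) =>
      if a = 0 then
        if h : r.1 = 0 ∧ j.1 < deg A k then
          some (tgt A k ⟨j.1, h.2⟩, ⟨d - 1 - j.1, by omega⟩, ⟨0, hd⟩)
        else none
      else
        if 0 < r.1 then some (k, ⟨r.1 - 1, by have := r.2; omega⟩, j)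
        else if h : j.1 + 1 < d then some (k, ⟨0, hd⟩, ⟨j.1 + 1, h⟩) else none
  start := some (u, ⟨0, hd⟩, ⟨0, hd⟩)
  accept := {some (v, ⟨0, hd⟩, ⟨0, hd⟩)}

variable (u : Fin m)

lemma evalFrom_none : ∀ w : List (Fin 2), (M A v d hd u).evalFrom none w = none
  | [] => rfl
  | _ :: w => evalFrom_none w

lemma step_zero (k : Fin m) (r j : Fin d) :
    (M A v d hd u).step (some (k, r, j)) 0 =
      if h : r.1 = 0 ∧ j.1 < deg A k then
        some (tgt A k ⟨j.1, h.2⟩, ⟨d - 1 - j.1, by omega⟩, ⟨0, hd⟩)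
      else none := by
  simp [M]

lemma step_one (k : Fin m) (r j : Fin d) :
    (M A v d hd u).step (some (k, r, j)) 1 =
      if 0 < r.1 then some (k, ⟨r.1 - 1, by have := r.2; omega⟩, j)
      else if h : j.1 + 1 < d then some (k, ⟨0, hd⟩, ⟨j.1 + 1, h⟩) else none := by
  simp [M]

lemma evalFrom_cons (q : Option (Fin m × Fin d × Fin d)) (a : Fin 2) (w : List (Fin 2)) :
    (M A v d hd u).evalFrom q (a :: w) = (M A v d hd u).evalFrom ((M A v d hd u).step q a) w := rfl

lemma mem_accept_iff (q : Option (Fin m × Fin d × Fin d)) :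
    q ∈ (M A v d hd u).accept ↔ q = some (v, ⟨0, hd⟩, ⟨0, hd⟩) := Iff.rfl

lemma fin_two (a : Fin 2) : a = 0 ∨ a = 1 := by omega

/-- mandatory-ones phase -/
lemma accept_mid (k : Fin m) :
    ∀ (r : ℕ) (hr : r < d) (w : List (Fin 2)),
      (M A v d hd u).evalFrom (some (k, ⟨r, hr⟩, ⟨0, hd⟩)) w ∈ (M A v d hd u).accept ↔
        ∃ w', w = List.replicate r 1 ++ w' ∧
          (M A v d hd u).evalFrom (some (k, ⟨0, hd⟩, ⟨0, hd⟩)) w' ∈ (M A v d hd u).accept := by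
  intro r
  induction r with
  | zero => intro hr w; simp
  | succ r ih =>
    intro hr w
    match w with
    | [] =>
      simp only [DFA.evalFrom, List.foldl_nil, mem_accept_iff]
      constructor
      · intro h; simp [Fin.ext_iff] at h
      · rintro ⟨w', hw', -⟩; simp at hw'
    | a :: w =>
      rcases fin_two a with rfl | rfl
      · rw [evalFrom_cons, step_zero]
        rw [dif_neg (by simp)]
        rw [evalFrom_none]
        constructor
        · intro h; simp [mem_accept_iff] at h
        · rintro ⟨w', hw', -⟩
          rw [List.replicate_succ] at hw'
          simp at hw'
      · rw [evalFrom_cons, step_one]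
        rw [if_pos (by simp)]
        simp only [Nat.add_sub_cancel]
        rw [ih (by omega) w]
        constructor
        · rintro ⟨w', rfl, h⟩
          exact ⟨w', by rw [List.replicate_succ]; rfl, h⟩
        · rintro ⟨w', hw', h⟩
          rw [List.replicate_succ] at hw'
          simp only [List.cons_append, List.cons.injEq] at hw'
          exact ⟨w', hw'.2, h⟩

end MPD

namespace MPD

variable {m : ℕ} (A : Matrix (Fin m) (Fin m) ℕ) (v : Fin m) (d : ℕ) (hd : 0 < d) (u : Fin m)

lemma acc_iff (hdeg : ∀ k, deg A k ≤ d) :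
    ∀ (w : List (Fin 2)) (j : ℕ) (hj : j < d) (k : Fin m),
      (M A v d hd u).evalFrom (some (k, ⟨0, hd⟩, ⟨j, hj⟩)) w ∈ (M A v d hd u).accept ↔
        ((w = [] ∧ k = v ∧ j = 0) ∨
          ∃ (jj : ℕ) (hjj : jj < deg A k) (w' : List (Fin 2)),
            j ≤ jj ∧
            w = List.replicate (jj - j) 1 ++ 0 :: (List.replicate (d - 1 - jj) 1 ++ w') ∧
            (M A v d hd u).evalFrom (some (tgt A k ⟨jj, hjj⟩, ⟨0, hd⟩, ⟨0, hd⟩)) w'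
              ∈ (M A v d hd u).accept) := by
  intro w
  induction w with
  | nil =>
    intro j hj k
    simp only [DFA.evalFrom, List.foldl_nil, mem_accept_iff]
    constructor
    · intro h
      simp only [Option.some.injEq, Prod.mk.injEq, Fin.mk.injEq] at h
      exact Or.inl ⟨by trivial, h.1, h.2.2⟩
    · rintro (⟨-, rfl, rfl⟩ | ⟨jj, hjj, w', hle, hw, -⟩)
      · rfl
      · simp at hw
  | cons a w ih =>
    intro j hj k
    rcases fin_two a with rfl | rfl
    · -- letter 0 : take the edge (jj must equal j)
      rw [evalFrom_cons, step_zero]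
      by_cases hjs : j < deg A k
      · rw [dif_pos ⟨rfl, hjs⟩]
        rw [accept_mid]
        constructor
        · rintro ⟨w', rfl, h⟩
          refine Or.inr ⟨j, hjs, w', le_refl _, ?_, h⟩
          simp
        · rintro (⟨h, -⟩ | ⟨jj, hjj, w', hle, hw, h⟩)
          · simp at h
          · -- word starts with 0, so jj = j
            have hjje : jj = j := by
              by_contra hne
              have : 0 < jj - j := by omega
              rw [(by omega : jj - j = (jj - j - 1) + 1), List.replicate_succ] at hw
              simp at hw
            subst hjje
            rw [Nat.sub_self] at hw
            simp only [List.replicate_zero, List.nil_append, List.cons.injEq] at hw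
            exact ⟨w', hw.2, by convert h using 4⟩
      · rw [dif_neg (by simp [hjs])]
        rw [evalFrom_none]
        constructor
        · intro h; simp [mem_accept_iff] at h
        · rintro (⟨h, -⟩ | ⟨jj, hjj, w', hle, hw, h⟩)
          · simp at h
          · have hjje : jj = j := by
              by_contra hne
              have : 0 < jj - j := by omega
              rw [(by omega : jj - j = (jj - j - 1) + 1), List.replicate_succ] at hw
              simp at hw
            omega
    · -- letter 1 : increment j
      rw [evalFrom_cons, step_one]
      rw [if_neg (by simp)]
      by_cases hj1 : j + 1 < d
      · rw [dif_pos hj1, ih (j+1) hj1 k]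
        constructor
        · rintro (⟨rfl, rfl, h⟩ | ⟨jj, hjj, w', hle, hw, h⟩)
          · omega
          · refine Or.inr ⟨jj, hjj, w', by omega, ?_, h⟩
            rw [(by omega : jj - j = (jj - (j+1)) + 1), List.replicate_succ]
            rw [hw]; rfl
        · rintro (⟨h, -⟩ | ⟨jj, hjj, w', hle, hw, h⟩)
          · simp at h
          · have hne : jj ≠ j := by
              intro h'
              subst h'
              rw [Nat.sub_self] at hw
              simp at hw
            refine Or.inr ⟨jj, hjj, w', by omega, ?_, h⟩
            rw [(by omega : jj - j = (jj - (j+1)) + 1), List.replicate_succ] at hw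
            simp only [List.cons_append, List.cons.injEq] at hw
            exact hw.2
      · rw [dif_neg hj1, evalFrom_none]
        constructor
        · intro h; simp [mem_accept_iff] at h
        · rintro (⟨h, -⟩ | ⟨jj, hjj, w', hle, hw, h⟩)
          · simp at h
          · have hne : jj ≠ j := by
              intro h'
              subst h'
              rw [Nat.sub_self] at hw
              simp at hw
            have := hdeg k
            omega

lemma count_len (w : List (Fin 2)) : w.count 0 + w.count 1 = w.length := by
  induction w with
  | nil => simp
  | cons a w ih =>
    rcases fin_two a with rfl | rfl <;>
      simp [List.count_cons] <;> omega

lemma cb0 (jj c : ℕ) (w' : List (Fin 2)) :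
    (List.replicate jj (1:Fin 2) ++ 0 :: (List.replicate c 1 ++ w')).count 0 = w'.count 0 + 1 := by
  simp [List.count_append, List.count_cons, List.count_replicate]

lemma cb1 (jj c : ℕ) (w' : List (Fin 2)) :
    (List.replicate jj (1:Fin 2) ++ 0 :: (List.replicate c 1 ++ w')).count 1 = jj + c + w'.count 1 := by
  simp [List.count_append, List.count_cons, List.count_replicate]
  ring

abbrev T (n : ℕ) (k : Fin m) : Type :=
  {w : List (Fin 2) //
    (M A v d hd u).evalFrom (some (k, ⟨0, hd⟩, ⟨0, hd⟩)) w ∈ (M A v d hd u).accept ∧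
    w.count 0 = n ∧ w.count 1 = n * (d - 1)}

lemma finiteT (n : ℕ) (k : Fin m) : Finite (T A v d hd u n k) := by
  have hlen : ∀ x : T A v d hd u n k, x.1.length = n * d := by
    rintro ⟨w, -, h0, h1⟩
    show w.length = n * d
    have hc := count_len w
    have hm : n + n * (d - 1) = n * d := by
      have h : 1 + (d - 1) = d := by omega
      calc n + n * (d - 1) = n * (1 + (d - 1)) := by ring
        _ = n * d := by rw [h]
    omega
  haveI : Finite {l : List (Fin 2) // l.length = n * d} :=
    inferInstanceAs (Finite (List.Vector (Fin 2) (n * d)))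
  exact Finite.of_injective
    (fun x => (⟨x.1, hlen x⟩ : List.Vector (Fin 2) (n * d)))
    (fun x y h => Subtype.ext (congrArg (fun z : List.Vector (Fin 2) (n * d) => z.1) h))

lemma rep_zero_inj {j1 j2 : ℕ} {t1 t2 : List (Fin 2)}
    (h : List.replicate j1 1 ++ 0 :: t1 = List.replicate j2 1 ++ 0 :: t2) :
    j1 = j2 ∧ t1 = t2 := by
  induction j1 generalizing j2 with
  | zero =>
    cases j2 with
    | zero => simpa using h
    | succ j2 => rw [List.replicate_succ] at h; simp at h
  | succ j1 ih =>
    cases j2 with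
    | zero => rw [List.replicate_succ] at h; simp at h
    | succ j2 =>
      rw [List.replicate_succ, List.replicate_succ] at h
      simp only [List.cons_append, List.cons.injEq] at h
      obtain ⟨e1, e2⟩ := ih h.2
      exact ⟨by omega, e2⟩

lemma card_T (hdeg : ∀ k, deg A k ≤ d) :
    ∀ (n : ℕ) (k : Fin m), Nat.card (T A v d hd u n k) = (A ^ n) k v := by
  intro n
  induction n with
  | zero =>
    intro k
    have hnil : ∀ x : T A v d hd u 0 k, x.1 = [] := by
      rintro ⟨w, -, h0, h1⟩
      show w = []
      have hc := count_len w
      exact List.eq_nil_of_length_eq_zero (by omega)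
    by_cases hkv : k = v
    · haveI : Unique (T A v d hd u 0 k) := by
        refine ⟨⟨⟨[], (mem_accept_iff A v d hd u _).2 (by rw [hkv]; rfl), by simp, by simp⟩⟩, ?_⟩
        intro x
        apply Subtype.ext
        rw [hnil x]
        rfl
      rw [Nat.card_unique, pow_zero, Matrix.one_apply, if_pos hkv]
    · haveI : IsEmpty (T A v d hd u 0 k) := by
        constructor
        intro x
        obtain ⟨w, hacc, h0, h1⟩ := x
        have hw : w = [] := by
          have hc := count_len w
          rw [h0, h1] at hc
          exact List.eq_nil_of_length_eq_zero (by omega)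
        rw [hw] at hacc
        rw [mem_accept_iff, DFA.evalFrom_nil] at hacc
        simp only [Option.some.injEq, Prod.mk.injEq] at hacc
        exact hkv hacc.1
      rw [Nat.card_of_isEmpty, pow_zero, Matrix.one_apply, if_neg hkv]
  | succ n ih =>
    intro k
    set g : (Σ jj : Fin (deg A k), T A v d hd u n (tgt A k jj)) → T A v d hd u (n + 1) k :=
      fun x =>
        ⟨List.replicate x.1.1 1 ++ 0 :: (List.replicate (d - 1 - x.1.1) 1 ++ x.2.1), by
          obtain ⟨⟨jj, hjj⟩, w', hacc, h0, h1⟩ := x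
          dsimp only
          have hjd : jj ≤ d - 1 := by have := hdeg k; omega
          refine ⟨?_, ?_, ?_⟩
          · rw [acc_iff A v d hd u hdeg _ 0 hd k]
            exact Or.inr ⟨jj, hjj, w', Nat.zero_le _, by simp, hacc⟩
          · rw [cb0]; omega
          · rw [cb1, h1]
            have hmul : (n + 1) * (d - 1) = (d - 1) + n * (d - 1) := by ring
            omega⟩
      with hgdef
    have hg : Function.Bijective g := by
      constructor
      · rintro ⟨⟨j1, hj1⟩, w1, hw1⟩ ⟨⟨j2, hj2⟩, w2, hw2⟩ h
        have h' : (g ⟨⟨j1, hj1⟩, ⟨w1, hw1⟩⟩).1 = (g ⟨⟨j2, hj2⟩, ⟨w2, hw2⟩⟩).1 := by rw [h]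
        simp only [hgdef] at h'
        obtain ⟨e1, e2⟩ := rep_zero_inj h'
        subst e1
        have e3 : w1 = w2 := List.append_cancel_left e2
        subst e3
        rfl
      · rintro ⟨w, hacc, h0, h1⟩
        rw [acc_iff A v d hd u hdeg _ 0 hd k] at hacc
        rcases hacc with ⟨rfl, -, -⟩ | ⟨jj, hjj, w', hle, hw, hacc'⟩
        · simp at h0
        · have hjd : jj ≤ d - 1 := by have := hdeg k; omega
          rw [Nat.sub_zero] at hw
          have hc0 : w'.count 0 = n := by
            rw [hw, cb0] at h0
            omega
          have hc1 : w'.count 1 = n * (d - 1) := by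
            rw [hw, cb1] at h1
            have hmul : (n + 1) * (d - 1) = (d - 1) + n * (d - 1) := by ring
            omega
          refine ⟨⟨⟨jj, hjj⟩, ⟨w', hacc', hc0, hc1⟩⟩, ?_⟩
          apply Subtype.ext
          simp only [hgdef]
          rw [hw]
    haveI : ∀ jj : Fin (deg A k), Fintype (T A v d hd u n (tgt A k jj)) :=
      fun jj => @Fintype.ofFinite _ (finiteT A v d hd u n (tgt A k jj))
    have hcard : Nat.card (T A v d hd u (n + 1) k)
        = ∑ jj : Fin (deg A k), Nat.card (T A v d hd u n (tgt A k jj)) := by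
      rw [← Nat.card_congr (Equiv.ofBijective g hg)]
      rw [Nat.card_eq_fintype_card, Fintype.card_sigma]
      exact Finset.sum_congr rfl (fun jj _ =>
        (Nat.card_eq_fintype_card (α := T A v d hd u n (tgt A k jj))).symm)
    rw [hcard]
    rw [Finset.sum_congr rfl (fun jj _ => ih (tgt A k jj))]
    rw [sum_tgt A k (fun l => (A ^ n) l v)]
    rw [pow_succ' A n, Matrix.mul_apply]

end MPD

/-- From a multigraph (adjacency matrix `A` with row sums bounded by `d ≥ 1`) to a DFA
over the two-letter alphabet `Fin 2`: there exists a DFA `M` such that for all `n`,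
the number of words accepted by `M` in which the letter `0` occurs exactly `n` times
and the letter `1` occurs exactly `n·(d-1)` times equals `(Aⁿ) u v`, the number of
paths of length `n` from `u` to `v`. -/
theorem multigraph_pathcount_to_dfa {m : ℕ} (A : Matrix (Fin m) (Fin m) ℕ)
    (u v : Fin m) (d : ℕ) (hd : 1 ≤ d) (hdeg : ∀ k : Fin m, ∑ l : Fin m, A k l ≤ d) :
    ∃ (Q : Type) (_ : Fintype Q) (M : DFA (Fin 2) Q),
      ∀ n : ℕ,
        Nat.card {w : List (Fin 2) //
            w ∈ M.accepts ∧ w.count 0 = n ∧ w.count 1 = n * (d - 1)} =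
          (A ^ n) u v := by
  refine ⟨Option (Fin m × Fin d × Fin d), inferInstance, MPD.M A v d hd u, fun n => ?_⟩
  exact MPD.card_T A v d hd u hdeg n u
end

section
/- Let V be a finite type with card V = m ≥ 1, let R be a binary relation on V, let s, t ∈ V, and let R' be the relation R together with the additional pair (t,t). Then t is reachable from s under R (i.e., Relation.ReflTransGen R s t) if and only if there exists a function f : Fin (m+1) → V with f 0 = s, f m = t, and R' (f i) (f (i+1)) for every i < m; that is, reachability holds if and only if there is an R'-path of length exactly m from s to t. -/
/-!
Let `R'` be `R` with the loop at `t` added, and let `D n` be the set of vertices from which an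
`R'`-path of length exactly `n` leads to `t`; it is the `n`-th iterate of `R'`-preimage applied
to `{t}`. The loop at `t` makes `D` increasing, so `D` is constant from the first index where it
does not grow; by counting, that happens at an index at most `card V`. Hence `D (card V)` is the
union of all `D n`, which is the set of vertices from which `t` is `R'`-reachable, and adding a
loop does not change reachability.
-/

open Relation

theorem Set.exists_succ_eq_of_monotone {α : Type*} [Finite α] {S : ℕ → Set α} (hS : Monotone S) :
    ∃ k ≤ Nat.card α, S (k + 1) = S k := by
  by_contra! hgrow
  have hcard : ∀ k ≤ Nat.card α + 1, k ≤ (S k).ncard := by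
    intro k
    induction k with
    | zero => simp
    | succ k ih =>
      intro hk
      have hlt : S k ⊂ S (k + 1) :=
        (hS k.le_succ).ssubset_of_ne (hgrow k (by omega)).symm
      exact (ih (by omega)).trans_lt (Set.ncard_lt_ncard hlt)
  have := (hcard _ le_rfl).trans (Set.ncard_le_card _)
  omega

theorem Monotone.iterate_subset_iterate_natCard {α : Type*} [Finite α] {F : Set α → Set α}
    (hF : Monotone F) {s : Set α} (hs : s ⊆ F s) (n : ℕ) :
    F^[n] s ⊆ F^[Nat.card α] s := by
  have hmono : Monotone fun k => F^[k] s := hF.monotone_iterate_of_le_map hs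
  obtain ⟨k, hk, hfix⟩ := Set.exists_succ_eq_of_monotone hmono
  rcases le_total n (Nat.card α) with hn | hn
  · exact hmono hn
  · have hconst : F^[n] s = F^[k] s := by
      rw [← Nat.sub_add_cancel (hk.trans hn), Function.iterate_add_apply,
        Function.iterate_fixed (by rwa [← Function.iterate_succ_apply' F k s])]
    exact hconst ▸ hmono hk

section relPreimage

variable {α : Type*} (r : α → α → Prop)

def relPreimage (S : Set α) : Set α :=
  {a | ∃ b ∈ S, r a b}

theorem relPreimage_mono : Monotone (relPreimage r) :=
  fun _ _ hST _ ⟨b, hb, hab⟩ => ⟨b, hST hb, hab⟩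

theorem mem_iterate_relPreimage_iff_exists_fin {n : ℕ} {a t : α} :
    a ∈ (relPreimage r)^[n] {t} ↔
      ∃ f : Fin (n + 1) → α, f 0 = a ∧ f (Fin.last n) = t ∧
        ∀ i : Fin n, r (f i.castSucc) (f i.succ) := by
  induction n generalizing a with
  | zero =>
    refine ⟨fun ha => ⟨fun _ => a, rfl, ha, Fin.elim0⟩, ?_⟩
    rintro ⟨f, rfl, rfl, -⟩
    rfl
  | succ n ih =>
    rw [Function.iterate_succ_apply']
    constructor
    · rintro ⟨b, hb, hab⟩
      obtain ⟨g, rfl, hlast, hg⟩ := ih.mp hb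
      refine ⟨Fin.cons a g, rfl, hlast, Fin.cases hab fun i => ?_⟩
      rw [← Fin.succ_castSucc, Fin.cons_succ, Fin.cons_succ]
      exact hg i
    · rintro ⟨f, rfl, hlast, hf⟩
      have htail (i : Fin n) : r (Fin.tail f i.castSucc) (Fin.tail f i.succ) := by
        simpa only [Fin.tail, Fin.succ_castSucc] using hf i.succ
      exact ⟨f 1, ih.mpr ⟨Fin.tail f, rfl, hlast, htail⟩, hf 0⟩

theorem reflTransGen_iff_exists_mem_iterate_relPreimage {a t : α} :
    ReflTransGen r a t ↔ ∃ n, a ∈ (relPreimage r)^[n] {t} := by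
  constructor
  · intro h
    induction h using ReflTransGen.head_induction_on with
    | refl => exact ⟨0, rfl⟩
    | head hab _ ih =>
      obtain ⟨n, hn⟩ := ih
      exact ⟨n + 1, by rw [Function.iterate_succ_apply']; exact ⟨_, hn, hab⟩⟩
  · rintro ⟨n, hn⟩
    induction n generalizing a with
    | zero => exact hn ▸ ReflTransGen.refl
    | succ n ih =>
      rw [Function.iterate_succ_apply'] at hn
      obtain ⟨b, hb, hab⟩ := hn
      exact ReflTransGen.head hab (ih hb)

end relPreimage

theorem reflTransGen_or_loop_eq {α : Type*} (r : α → α → Prop) (t : α) :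
    ReflTransGen (fun a b => r a b ∨ (a = t ∧ b = t)) = ReflTransGen r := by
  refine le_antisymm ?_ (ReflTransGen.mono fun a b hab => Or.inl hab)
  rw [← reflTransGen_reflGen (r := r)]
  refine ReflTransGen.mono fun a b hab => ?_
  rcases hab with hab | ⟨rfl, rfl⟩
  exacts [ReflGen.single hab, ReflGen.refl]

theorem reflTransGen_iff_exists_path_of_length_card_general {V : Type} [Fintype V] {m : ℕ}
    (hm : Fintype.card V = m) (R : V → V → Prop) (s t : V) :
    Relation.ReflTransGen R s t ↔
      ∃ f : Fin (m + 1) → V, f 0 = s ∧ f (Fin.last m) = t ∧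
        ∀ i : Fin m,
          R (f i.castSucc) (f i.succ) ∨ (f i.castSucc = t ∧ f i.succ = t) := by
  set R' : V → V → Prop := fun a b => R a b ∨ (a = t ∧ b = t)
  have hloop : {t} ⊆ relPreimage R' {t} :=
    Set.singleton_subset_iff.mpr ⟨t, rfl, Or.inr ⟨rfl, rfl⟩⟩
  have hstable (n : ℕ) : (relPreimage R')^[n] {t} ⊆ (relPreimage R')^[m] {t} := by
    rw [← hm, ← Nat.card_eq_fintype_card]
    exact (relPreimage_mono R').iterate_subset_iterate_natCard hloop n
  rw [← reflTransGen_or_loop_eq R t, reflTransGen_iff_exists_mem_iterate_relPreimage,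
    ← mem_iterate_relPreimage_iff_exists_fin R']
  exact ⟨fun ⟨n, hn⟩ => hstable n hn, fun h => ⟨m, h⟩⟩

/-- Reachability as existence of a path of fixed length: for a relation `R` on a
finite type `V` with `card V = m ≥ 1` and `R'` the relation `R` augmented with the
self-loop `(t,t)`, the vertex `t` is reachable from `s` under `R` iff there is an
`R'`-path of length exactly `m` from `s` to `t`. -/
theorem reflTransGen_iff_exists_path_of_length_card {V : Type} [Fintype V] {m : ℕ}
    (hm : Fintype.card V = m) (hm1 : 1 ≤ m) (R : V → V → Prop) (s t : V) :
    Relation.ReflTransGen R s t ↔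
      ∃ f : Fin (m + 1) → V, f 0 = s ∧ f (Fin.last m) = t ∧
        ∀ i : Fin m,
          R (f i.castSucc) (f i.succ) ∨ (f i.castSucc = t ∧ f i.succ = t) :=
  reflTransGen_iff_exists_path_of_length_card_general hm R s t
end
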